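/- For every α with 0 < α ≤ 1 and every β with 0 < β ≤ ∞, the SU(1,1)-invariant domain generated by the slice segments is contained in W: every point g·q, with g ∈ SU(1,1) and q ∈ {z₁} ∪ {ℓ₁(t) : 0 < t < α} ∪ {w₁} ∪ {ℓ₂(s) : 0 < s < β}, lies in W = {([z₁:z₂],[w₁:w₂]) : |z₂| < |z₁| and z₁w₁ − z₂w₂ ≠ 0}. In particular each domain D_β (the case α = 1, β < ∞) is contained in W. -/

import Mathlib

open Matrix Complex

noncomputable section

abbrev M2 : Type := Matrix (Fin 2) (Fin 2) ℂ

/-- The diagonal matrix `diag(1,-1)`. -/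
def I11 : M2 := !![1, 0; 0, -1]

/-- The conjugation `σ(g) = I₁₁ ⬝ ᵗ(ḡ)⁻¹ ⬝ I₁₁`. -/
def sigmaC (g : M2) : M2 := I11 * ((g.map (starRingEnd ℂ))ᵀ)⁻¹ * I11

/-- `overline{σ(g)}`, the matrix acting on the second factor. -/
def tw (g : M2) : M2 := (sigmaC g).map (starRingEnd ℂ)

/-- The predicate `g ∈ SU(1,1)`. -/
def SU11 (g : M2) : Prop := g.det = 1 ∧ (g.map (starRingEnd ℂ))ᵀ * I11 * g = I11

abbrev P1 : Type := Projectivization ℂ (Fin 2 → ℂ)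

lemma fstNe (a b : ℂ) (ha : a ≠ 0) : ![a, b] ≠ 0 := by
  intro h
  exact ha (by simpa using congrFun h 0)

lemma oneNe (b : ℂ) : ![1, b] ≠ 0 := fstNe 1 b one_ne_zero

/-- The open `SL(2,ℂ)`-orbit `{ z₁w₁ - z₂w₂ ≠ 0 }` in `ℙ¹ × ℙ¹`. -/
def Omega : Set (P1 × P1) :=
  {p | ∃ (z w : Fin 2 → ℂ) (hz : z ≠ 0) (hw : w ≠ 0),
    p = (Projectivization.mk ℂ z hz, Projectivization.mk ℂ w hw) ∧
    z 0 * w 0 - z 1 * w 1 ≠ 0}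

/-- The domain `W ⊂ ℙ¹ × ℙ¹`. -/
def W : Set (P1 × P1) :=
  {p | ∃ (z w : Fin 2 → ℂ) (hz : z ≠ 0) (hw : w ≠ 0),
    p = (Projectivization.mk ℂ z hz, Projectivization.mk ℂ w hw) ∧
    ‖z 1‖ < ‖z 0‖ ∧ z 0 * w 0 - z 1 * w 1 ≠ 0}

/-- Homogeneous coordinates of the slice point `z₁ = ([1:0],[1:0])`. -/
def z1v : (Fin 2 → ℂ) × (Fin 2 → ℂ) := (![1, 0], ![1, 0])

/-- Homogeneous coordinates of the slice point `w₁ = ([1:0],[1:i])`. -/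
def w1v : (Fin 2 → ℂ) × (Fin 2 → ℂ) := (![1, 0], ![1, Complex.I])

/-- Homogeneous coordinates of the slice point `ℓ₁(t)`. -/
def l1v (t : ℝ) : (Fin 2 → ℂ) × (Fin 2 → ℂ) :=
  (![(Real.cos (Real.pi * (1 - t) / 4) : ℂ),
      Complex.I * (Real.sin (Real.pi * (1 - t) / 4) : ℂ)],
   ![(Real.cos (Real.pi * (1 - t) / 4) : ℂ),
      Complex.I * (Real.sin (Real.pi * (1 - t) / 4) : ℂ)])

/-- Homogeneous coordinates of the slice point `ℓ₂(s)`. -/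
def l2v (s : ℝ) : (Fin 2 → ℂ) × (Fin 2 → ℂ) :=
  (![(Real.exp s : ℂ), Complex.I * (Real.exp (-s) : ℂ)],
   ![(Real.exp (-s) : ℂ), Complex.I * (Real.exp s : ℂ)])

/-!
An element `g ∈ SU(1,1)` preserves the Hermitian form `|z₀|² - |z₁|²`, and for every invertible
`g` the pair `(g, overline{σ(g)}) = (g, I₁₁ (gᵀ)⁻¹ I₁₁)` preserves the bilinear pairing
`z₀w₀ - z₁w₁ = zᵀ I₁₁ w` between the two factors. So both conditions defining `W` are
`SU(1,1)`-invariant and need only be checked at the slice points. At `ℓ₁(t)`, with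
`θ = π(1 - t)/4`, they read `sin² θ < cos² θ`, i.e. `cos 2θ > 0`, and `cos² θ + sin² θ ≠ 0`;
at `ℓ₂(s)` they read `e⁻ˢ < eˢ` and `2 ≠ 0`.
-/

section FormInvariance

variable {n R : Type*} [Fintype n] [CommSemiring R]

lemma mulVec_dotProduct_mulVec_mulVec {A g k : Matrix n n R} (h : gᵀ * A * k = A)
    (z w : n → R) : g *ᵥ z ⬝ᵥ A *ᵥ (k *ᵥ w) = z ⬝ᵥ A *ᵥ w := by
  rw [← vecMul_transpose, ← dotProduct_mulVec, mulVec_mulVec, mulVec_mulVec, h]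

lemma star_mulVec_dotProduct_mulVec_mulVec [StarRing R] {A g : Matrix n n R}
    (h : gᴴ * A * g = A) (z : n → R) :
    star (g *ᵥ z) ⬝ᵥ A *ᵥ (g *ᵥ z) = star z ⬝ᵥ A *ᵥ z := by
  rw [star_mulVec, ← dotProduct_mulVec, mulVec_mulVec, mulVec_mulVec, h]

end FormInvariance

lemma I11_mul_I11 : I11 * I11 = 1 := by
  simp [I11, Matrix.one_fin_two]

lemma tw_eq (g : M2) : tw g = I11 * gᵀ⁻¹ * I11 := by
  have hI : I11.map (starRingEnd ℂ) = I11 := by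
    ext i j; fin_cases i <;> fin_cases j <;> simp [I11]
  have hinv : ((g.map (starRingEnd ℂ))ᵀ⁻¹).map (starRingEnd ℂ) = gᵀ⁻¹ := by
    rw [show (g.map (starRingEnd ℂ))ᵀ = gᴴ from rfl, ← conjTranspose_nonsing_inv,
      ← transpose_nonsing_inv]
    ext i j; simp
  simp only [tw, sigmaC, Matrix.map_mul, hI, hinv]

lemma transpose_mul_I11_mul_tw {g : M2} (hg : IsUnit g.det) : gᵀ * I11 * tw g = I11 := by
  have hinv : gᵀ * gᵀ⁻¹ = 1 := mul_nonsing_inv _ (by rwa [det_transpose])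
  rw [tw_eq, ← mul_assoc, ← mul_assoc, mul_assoc gᵀ, I11_mul_I11, mul_one, hinv, one_mul]

lemma dotProduct_I11_mulVec (z w : Fin 2 → ℂ) : z ⬝ᵥ I11 *ᵥ w = z 0 * w 0 - z 1 * w 1 := by
  simp [I11, dotProduct, Fin.sum_univ_two, mulVec, sub_eq_add_neg]

lemma star_dotProduct_I11_mulVec (z : Fin 2 → ℂ) :
    star z ⬝ᵥ I11 *ᵥ z = ((‖z 0‖ ^ 2 - ‖z 1‖ ^ 2 : ℝ) : ℂ) := by
  rw [dotProduct_I11_mulVec]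
  push_cast
  simp only [Pi.star_apply, Complex.star_def, Complex.conj_mul']

lemma norm_sq_sub_norm_sq_mulVec {g : M2} (hg : gᴴ * I11 * g = I11) (z : Fin 2 → ℂ) :
    ‖(g *ᵥ z) 0‖ ^ 2 - ‖(g *ᵥ z) 1‖ ^ 2 = ‖z 0‖ ^ 2 - ‖z 1‖ ^ 2 := by
  have h := star_mulVec_dotProduct_mulVec_mulVec hg z
  rw [star_dotProduct_I11_mulVec, star_dotProduct_I11_mulVec] at h
  exact_mod_cast h

def WCoords (z w : Fin 2 → ℂ) : Prop := ‖z 1‖ < ‖z 0‖ ∧ z 0 * w 0 - z 1 * w 1 ≠ 0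

lemma wCoords_iff (z w : Fin 2 → ℂ) :
    WCoords z w ↔ ‖z 1‖ ^ 2 < ‖z 0‖ ^ 2 ∧ z ⬝ᵥ I11 *ᵥ w ≠ 0 := by
  rw [WCoords, dotProduct_I11_mulVec, sq_lt_sq₀ (norm_nonneg _) (norm_nonneg _)]

lemma WCoords.mulVec_of_SU11 {g : M2} (hg : SU11 g) {z w : Fin 2 → ℂ} (h : WCoords z w) :
    WCoords (g *ᵥ z) (tw g *ᵥ w) := by
  rw [wCoords_iff] at h ⊢
  have hdet : IsUnit g.det := by simp [hg.1]
  rw [mulVec_dotProduct_mulVec_mulVec (transpose_mul_I11_mul_tw hdet)]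
  have := norm_sq_sub_norm_sq_mulVec hg.2 z
  exact ⟨by linarith [h.1], h.2⟩

lemma WCoords.mk_mem_W {z w : Fin 2 → ℂ} (h : WCoords z w) (hz : z ≠ 0) (hw : w ≠ 0) :
    (Projectivization.mk ℂ z hz, Projectivization.mk ℂ w hw) ∈ W :=
  ⟨z, w, hz, hw, rfl, h⟩

lemma wCoords_z1v : WCoords z1v.1 z1v.2 := by
  simp [WCoords, z1v]

lemma wCoords_w1v : WCoords w1v.1 w1v.2 := by
  simp [WCoords, w1v]

lemma wCoords_l1v {t : ℝ} (ht0 : 0 < t) (ht2 : t < 2) : WCoords (l1v t).1 (l1v t).2 := by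
  set θ := Real.pi * (1 - t) / 4
  have hcos : 0 < Real.cos (2 * θ) := by
    apply Real.cos_pos_of_mem_Ioo
    constructor <;> simp only [θ] <;> nlinarith [Real.pi_pos]
  rw [wCoords_iff, dotProduct_I11_mulVec]
  simp only [l1v, cons_val_zero, cons_val_one, norm_mul, Complex.norm_I, Complex.norm_real,
    Real.norm_eq_abs, one_mul, sq_abs]
  constructor
  · linarith [Real.cos_two_mul' θ]
  · have h1 : (Real.cos θ : ℂ) ^ 2 + (Real.sin θ : ℂ) ^ 2 = 1 := by
      exact_mod_cast Real.cos_sq_add_sin_sq θ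
    exact fun h ↦ one_ne_zero
      (by linear_combination h - h1 + (Real.sin θ : ℂ) ^ 2 * Complex.I_mul_I)

lemma wCoords_l2v {s : ℝ} (hs : 0 < s) : WCoords (l2v s).1 (l2v s).2 := by
  simp only [WCoords, l2v, cons_val_zero, cons_val_one, norm_mul, Complex.norm_I,
    Complex.norm_real, Real.norm_eq_abs, one_mul, abs_of_pos (Real.exp_pos _)]
  refine ⟨Real.exp_lt_exp.mpr (by linarith), ?_⟩
  have h1 : (Real.exp s : ℂ) * (Real.exp (-s) : ℂ) = 1 := by
    rw [← Complex.ofReal_mul, ← Real.exp_add, add_neg_cancel, Real.exp_zero, Complex.ofReal_one]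
  exact fun h ↦ (two_ne_zero : (2 : ℂ) ≠ 0)
    (by linear_combination h - 2 * h1 + (Real.exp s * Real.exp (-s) : ℂ) * Complex.I_mul_I)

theorem invariant_domain_subset_W_general (α : ℝ) (hα1 : α ≤ 1)
    (β : ENNReal) (g : M2) (hg : SU11 g)
    (q : (Fin 2 → ℂ) × (Fin 2 → ℂ))
    (hq : q = z1v ∨ (∃ t : ℝ, 0 < t ∧ t < α ∧ q = l1v t) ∨ q = w1v ∨
      (∃ s : ℝ, 0 < s ∧ ENNReal.ofReal s < β ∧ q = l2v s))
    (hz : g.mulVec q.1 ≠ 0) (hw : (tw g).mulVec q.2 ≠ 0) :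
    (Projectivization.mk ℂ (g.mulVec q.1) hz,
      Projectivization.mk ℂ ((tw g).mulVec q.2) hw) ∈ W := by
  have hq : WCoords q.1 q.2 := by
    rcases hq with rfl | ⟨t, ht0, htα, rfl⟩ | rfl | ⟨s, hs0, -, rfl⟩
    · exact wCoords_z1v
    · exact wCoords_l1v ht0 (by linarith)
    · exact wCoords_w1v
    · exact wCoords_l2v hs0
  exact (hq.mulVec_of_SU11 hg).mk_mem_W hz hw

/-- For `0 < α ≤ 1` and `0 < β ≤ ∞`, the `SU(1,1)`-invariant domain generated by the
slice segments `{z₁} ∪ ℓ₁((0,α)) ∪ {w₁} ∪ ℓ₂((0,β))` is contained in `W`.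
In particular each domain `D_β` (the case `α = 1`, `β < ∞`) is contained in `W`. -/
theorem invariant_domain_subset_W (α : ℝ) (hα0 : 0 < α) (hα1 : α ≤ 1)
    (β : ENNReal) (hβ : 0 < β) (g : M2) (hg : SU11 g)
    (q : (Fin 2 → ℂ) × (Fin 2 → ℂ))
    (hq : q = z1v ∨ (∃ t : ℝ, 0 < t ∧ t < α ∧ q = l1v t) ∨ q = w1v ∨
      (∃ s : ℝ, 0 < s ∧ ENNReal.ofReal s < β ∧ q = l2v s))
    (hz : g.mulVec q.1 ≠ 0) (hw : (tw g).mulVec q.2 ≠ 0) :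
    (Projectivization.mk ℂ (g.mulVec q.1) hz,
      Projectivization.mk ℂ ((tw g).mulVec q.2) hw) ∈ W :=
  invariant_domain_subset_W_general α hα1 β g hg q hq hz hw

end
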